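/- arXiv:1912.12810 — 3 statements merged into one kernel-verified Lean document; each statement's English description precedes it below -/
import Mathlib

section
/- Let α > 0, let a < t be real numbers, and let f : ℝ → ℝ be continuous on [a, t]. Then the Grünwald–Letnikov sums converge to the Riemann–Liouville fractional integral: the sequence n ↦ ((t−a)/n)^α · Σ_{k=0}^{n} (Γ(α+k)/(Γ(α) · k!)) · f(t − k(t−a)/n) tends, as n → ∞, to (1/Γ(α)) · ∫_a^t (t−s)^(α−1) · f(s) ds. -/
/-!
Write `h = (t - a) / n` and `F u = f (t - u)`. By Euler's limit formula,
`Γ(α + k) / k! = ρ_k k^(α-1)` with `ρ_k → 1`, so for `k ≥ 1` the `k`-th term of the sum is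
`h / Γ(α)` times `ρ_k (kh)^(α-1) F(kh)`. Apart from the term `h^α f(t) → 0`, the sum is therefore
`1 / Γ(α)` times the integral over `(0, t - a]` of the step function with this value on
`((k - 1)h, kh]`. These step functions tend pointwise to `u^(α-1) F(u)` and are dominated by a
multiple of `u^(α-1) + (t - a)^(α-1)`, integrable since `α > 0`; dominated convergence and the
substitution `s = t - u` conclude.
-/

open MeasureTheory Real Filter Topology Finset Nat

namespace Real

lemma Gamma_add_nat_eq_mul_prod {α : ℝ} (hα : 0 < α) (n : ℕ) :
    Gamma (α + n) = Gamma α * ∏ j ∈ range n, (α + j) := by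
  induction n with
  | zero => simp
  | succ n ih =>
    rw [Nat.cast_succ, ← add_assoc, Gamma_add_one (by positivity), ih, prod_range_succ]
    ring

lemma GammaSeq_eq_of_pos {α : ℝ} (hα : 0 < α) (k : ℕ) :
    GammaSeq α k = k ^ α * k ! * Gamma α / ((α + k) * Gamma (α + k)) := by
  have hΓ := (Gamma_pos_of_pos hα).ne'
  rw [GammaSeq, prod_range_succ, Gamma_add_nat_eq_mul_prod hα]
  field_simp

end Real

noncomputable def gammaRatio (α : ℝ) (k : ℕ) : ℝ := Gamma (α + k) / k ! * (k : ℝ) ^ (1 - α)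

lemma tendsto_gammaRatio {α : ℝ} (hα : 0 < α) : Tendsto (gammaRatio α) atTop (𝓝 1) := by
  have hΓ := (Gamma_pos_of_pos hα).ne'
  have hlim : Tendsto (fun k : ℕ => Gamma α * ((k : ℝ) / (k + α)) / GammaSeq α k) atTop
      (𝓝 (Gamma α * 1 / Gamma α)) :=
    ((tendsto_natCast_div_add_atTop α).const_mul _).div (GammaSeq_tendsto_Gamma α) hΓ
  rw [mul_one, div_self hΓ] at hlim
  refine hlim.congr' ((eventually_ne_atTop 0).mono fun k hk => ?_)
  have hk0 : (0 : ℝ) < k := by positivity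
  have hΓk := (Gamma_pos_of_pos (by positivity : 0 < α + k)).ne'
  rw [gammaRatio, GammaSeq_eq_of_pos hα, rpow_sub hk0, rpow_one]
  field_simp
  ring

lemma gammaRatio_mul_rpow {α h : ℝ} (hh : 0 ≤ h) {k : ℕ} (hk : k ≠ 0) :
    gammaRatio α k * (k * h) ^ (α - 1) = Gamma (α + k) / k ! * h ^ (α - 1) := by
  have hk0 : (0 : ℝ) < k := by positivity
  rw [gammaRatio, mul_rpow hk0.le hh, mul_assoc (_ / _), ← mul_assoc ((k : ℝ) ^ _), ← rpow_add hk0]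
  simp

section Grid

variable {h : ℝ}

lemma le_natCeil_div_mul (hh : 0 < h) (u : ℝ) : u ≤ ⌈u / h⌉₊ * h :=
  (div_le_iff₀ hh).1 (Nat.le_ceil _)

lemma natCeil_div_mul_lt_add (hh : 0 < h) {u : ℝ} (hu : 0 ≤ u) : ⌈u / h⌉₊ * h < u + h := by
  have := mul_lt_mul_of_pos_right (Nat.ceil_lt_add_one (div_nonneg hu hh.le)) hh
  rwa [add_mul, one_mul, div_mul_cancel₀ _ hh.ne'] at this

lemma natCeil_div_mul_le (hh : 0 < h) {u : ℝ} {n : ℕ} (hu : u ≤ n * h) : ⌈u / h⌉₊ * h ≤ n * h :=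
  mul_le_mul_of_nonneg_right (by exact_mod_cast Nat.ceil_le.2 ((div_le_iff₀ hh).2 hu)) hh.le

lemma natCeil_div_eq_of_mem_Ioc (hh : 0 < h) {u : ℝ} {k : ℕ}
    (hu : u ∈ Set.Ioc (k * h) ((k + 1) * h)) : ⌈u / h⌉₊ = k + 1 := by
  rw [Nat.ceil_eq_iff k.succ_ne_zero, Nat.succ_sub_one, lt_div_iff₀ hh, div_le_iff₀ hh]
  exact_mod_cast hu

lemma intervalIntegral_natCeil_div {E : Type*} [NormedAddCommGroup E] [NormedSpace ℝ E]
    [CompleteSpace E] (hh : 0 < h) (g : ℕ → E) (n : ℕ) :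
    ∫ u in (0 : ℝ)..n * h, g ⌈u / h⌉₊ = h • ∑ k ∈ range n, g (k + 1) := by
  have hcell (k : ℕ) : Set.EqOn (fun _ => g (k + 1)) (fun u => g ⌈u / h⌉₊)
      (Set.uIoc (k * h) ((k + 1 : ℕ) * h)) := by
    intro u hu
    rw [Set.uIoc_of_le (by gcongr; omega), Nat.cast_succ] at hu
    simp only [natCeil_div_eq_of_mem_Ioc hh hu]
  have hsum := intervalIntegral.sum_integral_adjacent_intervals (a := fun k : ℕ => k * h)
    (f := fun u => g ⌈u / h⌉₊) (μ := volume) (n := n) fun k _ =>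
      intervalIntegrable_const.congr (hcell k)
  simp only [Nat.cast_zero, zero_mul] at hsum
  rw [← hsum, smul_sum]
  refine sum_congr rfl fun k _ => ?_
  rw [← intervalIntegral.integral_congr_ae (.of_forall (hcell k)), intervalIntegral.integral_const]
  push_cast
  ring_nf

end Grid

lemma tendsto_natCeil_div_mul {ι : Type*} {l : Filter ι} {h : ι → ℝ}
    (hh : Tendsto h l (𝓝[>] 0)) {u : ℝ} (hu : 0 ≤ u) :
    Tendsto (fun i => ⌈u / h i⌉₊ * h i) l (𝓝 u) := by
  have hpos : ∀ᶠ i in l, 0 < h i := hh.eventually self_mem_nhdsWithin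
  have hup : Tendsto (fun i => u + h i) l (𝓝 u) := by
    simpa using tendsto_const_nhds.add (tendsto_nhds_of_tendsto_nhdsWithin hh)
  exact tendsto_of_tendsto_of_tendsto_of_le_of_le' tendsto_const_nhds hup
    (hpos.mono fun i hi => le_natCeil_div_mul hi u)
    (hpos.mono fun i hi => (natCeil_div_mul_lt_add hi hu).le)

lemma tendsto_natCeil_div {ι : Type*} {l : Filter ι} {h : ι → ℝ}
    (hh : Tendsto h l (𝓝[>] 0)) {u : ℝ} (hu : 0 < u) :
    Tendsto (fun i => ⌈u / h i⌉₊) l atTop :=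
  tendsto_nat_ceil_atTop.comp ((tendsto_inv_nhdsGT_zero.comp hh).const_mul_atTop hu)

lemma rpow_le_rpow_add_rpow {u s T : ℝ} (hu : 0 < u) (hus : u ≤ s) (hsT : s ≤ T) (β : ℝ) :
    s ^ β ≤ u ^ β + T ^ β := by
  rcases le_total β 0 with hβ | hβ
  · linarith [rpow_le_rpow_of_nonpos hu hus hβ, rpow_nonneg (hu.le.trans (hus.trans hsT)) β]
  · linarith [rpow_le_rpow (hu.le.trans hus) hsT hβ, rpow_nonneg hu.le β]

theorem tendsto_intervalIntegral_natCeil_grid {ρ : ℕ → ℝ} (hρ : Tendsto ρ atTop (𝓝 1))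
    {β T : ℝ} (hβ : -1 < β) (hT : 0 < T) {F : ℝ → ℝ} (hF : ContinuousOn F (Set.Icc 0 T)) :
    Tendsto (fun n : ℕ => ∫ u in (0 : ℝ)..T,
        ρ ⌈u / (T / n)⌉₊ * (⌈u / (T / n)⌉₊ * (T / n)) ^ β * F (⌈u / (T / n)⌉₊ * (T / n)))
      atTop (𝓝 (∫ u in (0 : ℝ)..T, u ^ β * F u)) := by
  obtain ⟨R, hR⟩ := hρ.norm.bddAbove_range
  have hR0 : 0 ≤ R := (norm_nonneg _).trans (hR ⟨0, rfl⟩)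
  obtain ⟨M, hM⟩ := isCompact_Icc.exists_bound_of_continuousOn hF
  have hstep : Tendsto (fun n : ℕ => T / n) atTop (𝓝[>] 0) :=
    tendsto_nhdsWithin_iff.2 ⟨tendsto_const_div_atTop_nhds_zero_nat T,
      (eventually_gt_atTop 0).mono fun n hn => div_pos hT (Nat.cast_pos.2 hn)⟩
  have hgrid : ∀ᶠ n : ℕ in atTop, ∀ u ∈ Set.Ioc 0 T,
      u ≤ ⌈u / (T / n)⌉₊ * (T / n) ∧ ⌈u / (T / n)⌉₊ * (T / n) ≤ T := by
    filter_upwards [eventually_gt_atTop 0] with n hn u hu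
    have hh : 0 < T / n := by positivity
    have hTn : (n : ℝ) * (T / n) = T := by field_simp
    exact ⟨le_natCeil_div_mul hh u, (natCeil_div_mul_le hh (hu.2.trans hTn.ge)).trans hTn.le⟩
  refine intervalIntegral.tendsto_integral_filter_of_dominated_convergence
    (fun u => R * (u ^ β + T ^ β) * M) (.of_forall fun n => ?_) ?_ ?_ ?_
  · exact ((Measurable.of_discrete
      (f := fun k : ℕ => ρ k * (k * (T / n)) ^ β * F (k * (T / n)))).comp
      (Nat.measurable_ceil.comp (measurable_id.div_const _))).aestronglyMeasurable
  · filter_upwards [hgrid] with n hn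
    refine ae_of_all _ fun u hu => ?_
    rw [Set.uIoc_of_le hT.le] at hu
    obtain ⟨hus, hsT⟩ := hn u hu
    have hs : 0 ≤ ⌈u / (T / n)⌉₊ * (T / n) := hu.1.le.trans hus
    rw [norm_mul, norm_mul, norm_of_nonneg (rpow_nonneg hs β)]
    exact mul_le_mul (mul_le_mul (hR ⟨_, rfl⟩) (rpow_le_rpow_add_rpow hu.1 hus hsT β)
      (rpow_nonneg hs β) hR0) (hM _ ⟨hs, hsT⟩) (norm_nonneg _)
      (mul_nonneg hR0 (add_nonneg (rpow_nonneg hu.1.le β) (rpow_nonneg hT.le β)))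
  · exact (((intervalIntegral.intervalIntegrable_rpow' hβ).add
      intervalIntegrable_const).const_mul R).mul_const M
  · refine ae_of_all _ fun u hu => ?_
    rw [Set.uIoc_of_le hT.le] at hu
    have hs := tendsto_natCeil_div_mul hstep hu.1.le
    have hsIcc : Tendsto (fun n : ℕ => ⌈u / (T / n)⌉₊ * (T / n)) atTop (𝓝[Set.Icc 0 T] u) :=
      tendsto_nhdsWithin_iff.2
        ⟨hs, hgrid.mono fun n hn => ⟨hu.1.le.trans (hn u hu).1, (hn u hu).2⟩⟩
    simpa using ((hρ.comp (tendsto_natCeil_div hstep hu.1)).mul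
      ((continuousAt_rpow_const u β (Or.inl hu.1.ne')).tendsto.comp hs)).mul
      ((hF u ⟨hu.1.le, hu.2⟩).tendsto.comp hsIcc)

lemma rpow_mul_sum_Gamma_div_eq {α h : ℝ} (hα : 0 < α) (hh : 0 < h) (g : ℝ → ℝ) (n : ℕ) :
    h ^ α * ∑ k ∈ range (n + 1), Gamma (α + k) / (Gamma α * k !) * g (k * h) =
      h ^ α * g 0 + 1 / Gamma α * ∫ u in (0 : ℝ)..n * h,
        gammaRatio α ⌈u / h⌉₊ * (⌈u / h⌉₊ * h) ^ (α - 1) * g (⌈u / h⌉₊ * h) := by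
  have hΓ := (Gamma_pos_of_pos hα).ne'
  rw [intervalIntegral_natCeil_div hh (fun k => gammaRatio α k * (k * h) ^ (α - 1) * g (k * h)),
    sum_range_succ', mul_add, add_comm, smul_eq_mul]
  congr 1
  · simp [hΓ]
  rw [mul_sum, mul_sum, mul_sum]
  refine sum_congr rfl fun k _ => ?_
  rw [gammaRatio_mul_rpow hh.le k.succ_ne_zero, rpow_sub_one hh.ne']
  field_simp

theorem gl_tendsto_rl (α a t : ℝ) (hα : 0 < α) (hat : a < t) (f : ℝ → ℝ)
    (hf : ContinuousOn f (Set.Icc a t)) :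
    Filter.Tendsto
      (fun n : ℕ =>
        ((t - a) / n) ^ α *
          ∑ k ∈ Finset.range (n + 1),
            (Real.Gamma (α + k) / (Real.Gamma α * (Nat.factorial k))) *
              f (t - k * (t - a) / n))
      Filter.atTop
      (nhds ((1 / Real.Gamma α) * ∫ s in a..t, (t - s) ^ (α - 1) * f s)) := by
  have hT : 0 < t - a := sub_pos.2 hat
  have hF : ContinuousOn (fun u => f (t - u)) (Set.Icc 0 (t - a)) :=
    hf.comp (continuous_const.sub continuous_id).continuousOn fun u hu =>
      ⟨by linarith [hu.2], by linarith [hu.1]⟩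
  have hRL : ∫ s in a..t, (t - s) ^ (α - 1) * f s =
      ∫ u in (0 : ℝ)..t - a, u ^ (α - 1) * f (t - u) := by
    simpa using (intervalIntegral.integral_comp_sub_left
      (fun s => (t - s) ^ (α - 1) * f s) t (a := 0) (b := t - a)).symm
  have hpow : Tendsto (fun n : ℕ => ((t - a) / n) ^ α) atTop (𝓝 0) := by
    simpa [zero_rpow hα.ne', Function.comp_def] using
      (continuousAt_rpow_const 0 α (Or.inr hα.le)).tendsto.comp
        (tendsto_const_div_atTop_nhds_zero_nat (t - a))
  have hlim := (hpow.mul_const (f t)).add <|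
    (tendsto_intervalIntegral_natCeil_grid (tendsto_gammaRatio hα) (β := α - 1) (by linarith)
      hT hF).const_mul (1 / Gamma α)
  rw [zero_mul, zero_add, ← hRL] at hlim
  refine hlim.congr' ((eventually_ne_atTop 0).mono fun n hn => ?_)
  have hTn : (n : ℝ) * ((t - a) / n) = t - a := by field_simp
  simp only [mul_div_assoc]
  rw [rpow_mul_sum_Gamma_div_eq hα (by positivity) (fun u => f (t - u)) n, hTn, sub_zero]
end

section
/- Let n ≥ 1 be an integer, let a < T be real numbers, and let f : ℝ → ℝ be (n+1)-times continuously differentiable on [a, T]. Then for every t ∈ (a, T], the Caputo fractional derivative (1/Γ(n−α)) · ∫_a^t f^(n)(s) · (t−s)^(n−α−1) ds tends to f^(n)(t) as α → n from below (α ranging over (n−1, n)). -/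
open MeasureTheory Real Filter Set Topology
open scoped NNReal

/-!
Substituting `β = n - α`, the Caputo derivative is the Riemann–Liouville integral of order `β` of
`g = f⁽ⁿ⁾`, and `α → n⁻` becomes `β → 0⁺`. Split `g = (g - g t) + g t`. The constant part integrates
to `g t · (t - a)^β / Γ(β + 1) → g t`. Since `f` has one more derivative, `g` is Lipschitz, so
`|g s - g t| ≤ K (t - s)` gains one power of `t - s`; its integral is then bounded by
`β / Γ(β + 1) · K (t - a)^(β + 1) / (β + 1) → 0`, the factor `1 / Γ β = β / Γ(β + 1)` vanishing.
-/

noncomputable def riemannLiouvilleIntegral (β : ℝ) (g : ℝ → ℝ) (a t : ℝ) : ℝ :=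
  (1 / Gamma β) * ∫ s in a..t, g s * (t - s) ^ (β - 1)

theorem intervalIntegrable_sub_rpow {r : ℝ} (hr : -1 < r) (a t : ℝ) :
    IntervalIntegrable (fun s => (t - s) ^ r) volume a t := by
  simpa using ((intervalIntegral.intervalIntegrable_rpow' (a := 0) (b := t - a) hr).comp_sub_left
    t).symm

theorem integral_sub_rpow {r : ℝ} (hr : -1 < r) (a t : ℝ) :
    ∫ s in a..t, (t - s) ^ r = (t - a) ^ (r + 1) / (r + 1) := by
  rw [intervalIntegral.integral_comp_sub_left (fun x => x ^ r) t, sub_self,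
    integral_rpow (Or.inl hr), zero_rpow (by linarith), sub_zero]

theorem one_div_Gamma_eq_div_Gamma_add_one {β : ℝ} (hβ : β ≠ 0) :
    1 / Gamma β = β / Gamma (β + 1) := by
  rw [Gamma_add_one hβ]
  field_simp

theorem riemannLiouvilleIntegral_const {β : ℝ} (hβ : 0 < β) (c a t : ℝ) :
    riemannLiouvilleIntegral β (fun _ => c) a t = c * ((t - a) ^ β / Gamma (β + 1)) := by
  rw [riemannLiouvilleIntegral, intervalIntegral.integral_const_mul,
    integral_sub_rpow (by linarith), sub_add_cancel, one_div_Gamma_eq_div_Gamma_add_one hβ.ne']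
  field_simp

theorem riemannLiouvilleIntegral_add {β : ℝ} (hβ : 0 < β) {f g : ℝ → ℝ} {a t : ℝ}
    (hf : ContinuousOn f (uIcc a t)) (hg : ContinuousOn g (uIcc a t)) :
    riemannLiouvilleIntegral β (fun s => f s + g s) a t =
      riemannLiouvilleIntegral β f a t + riemannLiouvilleIntegral β g a t := by
  have hker := intervalIntegrable_sub_rpow (r := β - 1) (by linarith) a t
  simp only [riemannLiouvilleIntegral, add_mul]
  rw [intervalIntegral.integral_add (hker.continuousOn_mul hf) (hker.continuousOn_mul hg), mul_add]

theorem abs_riemannLiouvilleIntegral_le {β K : ℝ} (hβ : 0 < β) {g : ℝ → ℝ} {a t : ℝ}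
    (hat : a ≤ t) (hg : ∀ s ∈ Icc a t, |g s| ≤ K * (t - s)) :
    |riemannLiouvilleIntegral β g a t| ≤
      β / Gamma (β + 1) * (K * ((t - a) ^ (β + 1) / (β + 1))) := by
  have hpointwise : ∀ s ∈ Ioc a t, ‖g s * (t - s) ^ (β - 1)‖ ≤ K * (t - s) ^ β := by
    intro s ⟨has, hst⟩
    have hts : 0 ≤ t - s := sub_nonneg.mpr hst
    have hker : 0 ≤ (t - s) ^ (β - 1) := rpow_nonneg hts _
    calc ‖g s * (t - s) ^ (β - 1)‖ = |g s| * (t - s) ^ (β - 1) := by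
          rw [norm_mul, norm_eq_abs, norm_of_nonneg hker]
      _ ≤ K * (t - s) * (t - s) ^ (β - 1) := mul_le_mul_of_nonneg_right (hg s ⟨has.le, hst⟩) hker
      _ = K * (t - s) ^ β := by
          rw [mul_assoc, ← rpow_one_add' hts (by linarith), add_sub_cancel]
  have hintegral : ‖∫ s in a..t, g s * (t - s) ^ (β - 1)‖ ≤ K * ((t - a) ^ (β + 1) / (β + 1)) := by
    rw [← integral_sub_rpow (by linarith), ← intervalIntegral.integral_const_mul]
    exact intervalIntegral.norm_integral_le_of_norm_le hat (ae_of_all _ hpointwise)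
      ((intervalIntegrable_sub_rpow (by linarith) a t).const_mul K)
  rw [riemannLiouvilleIntegral, abs_mul, one_div_Gamma_eq_div_Gamma_add_one hβ.ne',
    abs_of_pos (div_pos hβ (Gamma_pos_of_pos (by linarith)))]
  exact mul_le_mul_of_nonneg_left hintegral (div_pos hβ (Gamma_pos_of_pos (by linarith))).le

theorem continuousAt_Gamma_add_one_zero : ContinuousAt (fun β => Gamma (β + 1)) 0 := by
  refine ContinuousAt.comp_of_eq (g := Gamma) ?_ (continuous_add_const 1).continuousAt (zero_add 1)
  exact (differentiableAt_Gamma fun m h => by linarith [m.cast_nonneg (α := ℝ)]).continuousAt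

theorem tendsto_riemannLiouvilleIntegral_nhdsGT_zero {K : ℝ≥0} {g : ℝ → ℝ} {a t : ℝ}
    (hat : a < t) (hg : LipschitzOnWith K g (Icc a t)) :
    Tendsto (fun β => riemannLiouvilleIntegral β g a t) (𝓝[>] 0) (𝓝 (g t)) := by
  have hcont : ContinuousOn g (uIcc a t) := by
    rw [uIcc_of_le hat.le]
    exact hg.continuousOn
  have hdecomp : ∀ β ∈ Ioi (0 : ℝ), riemannLiouvilleIntegral β (fun s => g s - g t) a t +
      g t * ((t - a) ^ β / Gamma (β + 1)) = riemannLiouvilleIntegral β g a t := by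
    intro β hβ
    rw [← riemannLiouvilleIntegral_const hβ, ← riemannLiouvilleIntegral_add hβ
      (f := fun s => g s - g t) (hcont.sub continuousOn_const) continuousOn_const]
    simp only [sub_add_cancel]
  have hΓ := continuousAt_Gamma_add_one_zero
  have hΓ0 : Gamma (0 + 1) ≠ 0 := by simp
  have hdiff : Tendsto (fun β => riemannLiouvilleIntegral β (fun s => g s - g t) a t)
      (𝓝[>] 0) (𝓝 0) := by
    have hbound : ContinuousAt
        (fun β => β / Gamma (β + 1) * (K * ((t - a) ^ (β + 1) / (β + 1)))) 0 := by
      refine (continuousAt_id.div hΓ hΓ0).mul (continuousAt_const.mul ?_)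
      exact ((continuousAt_const_rpow (sub_pos.mpr hat).ne').comp
        (continuous_add_const 1).continuousAt).div (continuous_add_const 1).continuousAt (by simp)
    refine squeeze_zero_norm' ?_ (by simpa using hbound.tendsto.mono_left nhdsWithin_le_nhds)
    filter_upwards [self_mem_nhdsWithin] with β hβ
    refine abs_riemannLiouvilleIntegral_le hβ hat.le fun s hs => ?_
    simpa only [Real.dist_eq, abs_of_nonpos (sub_nonpos.mpr hs.2), neg_sub] using
      hg.dist_le_mul s hs t (right_mem_Icc.mpr hat.le)
  have hconst : Tendsto (fun β => g t * ((t - a) ^ β / Gamma (β + 1))) (𝓝[>] 0) (𝓝 (g t)) := by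
    have hc : ContinuousAt (fun β => g t * ((t - a) ^ β / Gamma (β + 1))) 0 :=
      continuousAt_const.mul ((continuousAt_const_rpow (sub_pos.mpr hat).ne').div hΓ hΓ0)
    simpa using hc.tendsto.mono_left nhdsWithin_le_nhds
  simpa using (hdiff.add hconst).congr' (eventually_nhdsWithin_of_forall hdecomp)

theorem ContDiffOn.exists_lipschitzOnWith_iteratedDerivWithin {n : ℕ} {f : ℝ → ℝ} {s : Set ℝ}
    (hf : ContDiffOn ℝ (n + 1) f s) (hs : UniqueDiffOn ℝ s) (hconv : Convex ℝ s)
    (hcomp : IsCompact s) : ∃ K, LipschitzOnWith K (iteratedDerivWithin n f s) s := by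
  obtain ⟨C, hC⟩ := hcomp.exists_bound_of_continuousOn
    (hf.continuousOn_iteratedDerivWithin le_rfl hs)
  refine ⟨C.toNNReal, hconv.lipschitzOnWith_of_nnnorm_derivWithin_le
    (hf.differentiableOn_iteratedDerivWithin (by exact_mod_cast n.lt_succ_self) hs)
    fun x hx => ?_⟩
  rw [← iteratedDerivWithin_succ, ← NNReal.coe_le_coe, coe_nnnorm]
  exact (hC x hx).trans (le_coe_toNNReal C)

theorem caputo_tendsto_deriv_n_general (n : ℕ) (a T : ℝ) (haT : a < T)
    (f : ℝ → ℝ) (hf : ContDiffOn ℝ (n + 1) f (Set.Icc a T)) :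
    ∀ t ∈ Set.Ioc a T,
      Filter.Tendsto
        (fun α : ℝ =>
          (1 / Real.Gamma (n - α)) *
            ∫ s in a..t, iteratedDerivWithin n f (Set.Icc a T) s * (t - s) ^ ((n : ℝ) - α - 1))
        (nhdsWithin (n : ℝ) (Set.Ioo ((n : ℝ) - 1) (n : ℝ)))
        (nhds (iteratedDerivWithin n f (Set.Icc a T) t)) := by
  rintro t ⟨hat, htT⟩
  obtain ⟨K, hK⟩ := hf.exists_lipschitzOnWith_iteratedDerivWithin (uniqueDiffOn_Icc haT)
    (convex_Icc a T) isCompact_Icc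
  have hlim := tendsto_riemannLiouvilleIntegral_nhdsGT_zero hat
    (hK.mono (Icc_subset_Icc_right htT))
  have hβ : Tendsto (fun α : ℝ => (n : ℝ) - α) (𝓝[Ioo ((n : ℝ) - 1) n] n) (𝓝[>] 0) := by
    refine tendsto_nhdsWithin_iff.mpr ⟨?_, ?_⟩
    · simpa using ((continuous_sub_left (n : ℝ)).tendsto n).mono_left nhdsWithin_le_nhds
    · filter_upwards [self_mem_nhdsWithin] with α hα
      exact sub_pos.mpr hα.2
  exact hlim.comp hβ

theorem caputo_tendsto_deriv_n (n : ℕ) (hn : 1 ≤ n) (a T : ℝ) (haT : a < T)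
    (f : ℝ → ℝ) (hf : ContDiffOn ℝ (n + 1) f (Set.Icc a T)) :
    ∀ t ∈ Set.Ioc a T,
      Filter.Tendsto
        (fun α : ℝ =>
          (1 / Real.Gamma (n - α)) *
            ∫ s in a..t, iteratedDerivWithin n f (Set.Icc a T) s * (t - s) ^ ((n : ℝ) - α - 1))
        (nhdsWithin (n : ℝ) (Set.Ioo ((n : ℝ) - 1) (n : ℝ)))
        (nhds (iteratedDerivWithin n f (Set.Icc a T) t)) :=
  caputo_tendsto_deriv_n_general n a T haT f hf
end

section
/- Let 0 < α < 1, σ ≥ 0, and let f : [0,∞) → ℝ be continuously differentiable with f(0) = 0, and suppose there is M > 0 with |f(t)| ≤ M·e^(σ t) and |f′(t)| ≤ M·e^(σ t) for all t ≥ 0. Then for every s > σ, ∫_0^∞ e^(−s t) · ( (1/Γ(1−α)) · ∫_0^t (t−u)^(−α) · f′(u) du ) dt = s^α · ∫_0^∞ e^(−s t) · f(t) dt. -/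
/-!
Extend `e^{-st} f'` and `e^{-st} t^{-α}` by zero to the negative axis. Since
`e^{-su} e^{-s(t-u)} = e^{-st}`, the ordinary convolution of these two integrable functions is
`e^{-st}` times the causal convolution `∫₀ᵗ (t-u)^{-α} f'(u) du`, so integrating it over `ℝ`
(Fubini) gives `L[t^{-α}](s) · L[f'](s) = Γ(1-α) s^{α-1} · s L[f](s)`, where the last factor
is integration by parts with `f 0 = 0`; the exponential bounds make every transform converge
for `s > σ`.
-/

open MeasureTheory Real Set Filter
open scoped Convolution

noncomputable section

/-- Where the integrand is not integrable on `(0, ∞)` this is the junk value `0`. -/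
def laplace (g : ℝ → ℝ) (s : ℝ) : ℝ :=
  ∫ t in Ioi 0, exp (-s * t) * g t

def LaplaceIntegrable (g : ℝ → ℝ) (s : ℝ) : Prop :=
  IntegrableOn (fun t => exp (-s * t) * g t) (Ioi 0)

theorem laplace_const_mul (c : ℝ) (g : ℝ → ℝ) (s : ℝ) :
    laplace (fun t => c * g t) s = c * laplace g s := by
  simp only [laplace, mul_left_comm _ c]
  exact integral_const_mul c _

theorem laplaceIntegrable_of_abs_le_exp {g : ℝ → ℝ} {M σ s : ℝ} (hs : σ < s)
    (hmeas : AEStronglyMeasurable g (volume.restrict (Ioi 0)))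
    (hbound : ∀ t, 0 < t → |g t| ≤ M * exp (σ * t)) : LaplaceIntegrable g s := by
  refine ((exp_neg_integrableOn_Ioi 0 (sub_pos.2 hs)).const_mul M).mono' ?_ ?_
  · exact (continuous_exp.comp (continuous_const_mul (-s))).aestronglyMeasurable.mul hmeas
  · refine (ae_restrict_iff' measurableSet_Ioi).2 (ae_of_all _ fun t ht => ?_)
    calc ‖exp (-s * t) * g t‖ = exp (-s * t) * |g t| := by
          rw [norm_mul, norm_of_nonneg (exp_pos _).le, norm_eq_abs]
      _ ≤ exp (-s * t) * (M * exp (σ * t)) := by gcongr; exact hbound t ht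
      _ = M * exp (-(s - σ) * t) := by rw [mul_left_comm, ← exp_add]; ring_nf

theorem laplaceIntegrable_rpow {a s : ℝ} (ha : 0 < a) (hs : 0 < s) :
    LaplaceIntegrable (fun t => t ^ (a - 1)) s := by
  have := integrableOn_rpow_mul_exp_neg_mul_rpow (p := 1) (by linarith : -1 < a - 1) one_pos hs
  simpa only [LaplaceIntegrable, rpow_one, mul_comm] using this

theorem laplace_rpow {a s : ℝ} (ha : 0 < a) (hs : 0 < s) :
    laplace (fun t => t ^ (a - 1)) s = Gamma a * s ^ (-a) := by
  have := integral_rpow_mul_exp_neg_mul_Ioi ha hs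
  simp only [← neg_mul, mul_comm _ (exp _)] at this
  rw [laplace, this, one_div, inv_rpow hs.le, rpow_neg hs.le, mul_comm]

theorem laplace_deriv {f f' : ℝ → ℝ} {s : ℝ} (hcont : ContinuousWithinAt f (Ici 0) 0)
    (hderiv : ∀ t ∈ Ioi 0, HasDerivAt f (f' t) t) (hf : LaplaceIntegrable f s)
    (hf' : LaplaceIntegrable f' s) : laplace f' s = s * laplace f s - f 0 := by
  have hF : ∀ t ∈ Ioi (0 : ℝ), HasDerivAt (fun t => exp (-s * t) * f t)
      (exp (-s * t) * f' t - s * (exp (-s * t) * f t)) t := fun t ht =>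
    (((hasDerivAt_id t).const_mul (-s)).exp.mul (hderiv t ht)).congr_deriv
      (by simp only [id]; ring)
  have hF' : IntegrableOn (fun t => exp (-s * t) * f' t - s * (exp (-s * t) * f t)) (Ioi 0) :=
    hf'.sub (hf.const_mul s)
  have hFc : ContinuousWithinAt (fun t => exp (-s * t) * f t) (Ici 0) 0 :=
    (continuous_exp.comp (continuous_const_mul (-s))).continuousWithinAt.mul hcont
  have key := integral_Ioi_of_hasDerivAt_of_tendsto hFc hF hF'
    (tendsto_zero_of_hasDerivAt_of_integrableOn_Ioi hF hF' hf)
  rw [integral_sub hf' (hf.const_mul s), integral_const_mul] at key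
  simp only [mul_zero, exp_zero, one_mul, zero_sub] at key
  rw [laplace, laplace]
  linarith

theorem laplace_intervalIntegral_conv {g h : ℝ → ℝ} {s : ℝ} (hg : LaplaceIntegrable g s)
    (hh : LaplaceIntegrable h s) :
    laplace (fun t => ∫ u in (0 : ℝ)..t, g (t - u) * h u) s = laplace g s * laplace h s := by
  unfold LaplaceIntegrable at hg hh
  set G := (Ioi (0 : ℝ)).indicator fun t => exp (-s * t) * g t
  set H := (Ioi (0 : ℝ)).indicator fun t => exp (-s * t) * h t
  have hprod : ∀ t u, H u * G (t - u) =
      (Ioo 0 t).indicator (fun u => exp (-s * t) * (g (t - u) * h u)) u := by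
    intro t u
    by_cases hu : 0 < u <;> by_cases hut : u < t
    · simp only [H, G]
      rw [indicator_of_mem (mem_Ioi.2 hu), indicator_of_mem (mem_Ioi.2 (sub_pos.2 hut)),
        indicator_of_mem (mem_Ioo.2 ⟨hu, hut⟩), show -s * t = -s * u + -s * (t - u) by ring,
        exp_add]
      ring
    all_goals simp [H, G, hu, hut]
  have hconv : ∀ t, (H ⋆ G) t = (Ioi 0).indicator
      (fun t => exp (-s * t) * ∫ u in (0 : ℝ)..t, g (t - u) * h u) t := by
    intro t
    simp only [convolution_def, ContinuousLinearMap.lsmul_apply, smul_eq_mul, hprod,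
      integral_indicator measurableSet_Ioo]
    by_cases ht : 0 < t
    · rw [indicator_of_mem (mem_Ioi.2 ht), integral_const_mul,
        intervalIntegral.integral_of_le ht.le, integral_Ioc_eq_integral_Ioo]
    · rw [indicator_of_notMem (by simpa using ht), Ioo_eq_empty ht, Measure.restrict_empty,
        integral_zero_measure]
  have hfubini := integral_convolution (ContinuousLinearMap.lsmul ℝ ℝ)
    (hh.integrable_indicator measurableSet_Ioi : Integrable H)
    (hg.integrable_indicator measurableSet_Ioi : Integrable G)
  rw [funext hconv] at hfubini
  simp only [integral_indicator measurableSet_Ioi, ContinuousLinearMap.lsmul_apply,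
    smul_eq_mul] at hfubini
  rw [laplace, laplace, laplace, hfubini, mul_comm, integral_indicator measurableSet_Ioi,
    integral_indicator measurableSet_Ioi]

end

theorem laplace_caputo_general (α σ : ℝ) (hα1 : α < 1) (hσ : 0 ≤ σ)
    (f : ℝ → ℝ) (hf : ContDiffOn ℝ 1 f (Set.Ici 0)) (hf0 : f 0 = 0) (M : ℝ)
    (hfb : ∀ t : ℝ, 0 ≤ t → |f t| ≤ M * Real.exp (σ * t))
    (hfb' : ∀ t : ℝ, 0 ≤ t → |derivWithin f (Set.Ici 0) t| ≤ M * Real.exp (σ * t)) :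
    ∀ s : ℝ, σ < s →
      ∫ t in Set.Ioi (0 : ℝ), Real.exp (-s * t) *
          ((1 / Real.Gamma (1 - α)) *
            ∫ u in (0 : ℝ)..t, (t - u) ^ (-α) * derivWithin f (Set.Ici 0) u) =
        s ^ α * ∫ t in Set.Ioi (0 : ℝ), Real.exp (-s * t) * f t := by
  intro s hs
  have hs0 : 0 < s := hσ.trans_lt hs
  have hderiv : ∀ t ∈ Ioi 0, HasDerivAt f (derivWithin f (Ici 0) t) t := fun t ht =>
    (hf.differentiableOn one_ne_zero t (Ioi_subset_Ici_self ht)).hasDerivWithinAt.hasDerivAt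
      (Ici_mem_nhds ht)
  have hf'c : ContinuousOn (derivWithin f (Ici 0)) (Ioi 0) :=
    (hf.continuousOn_derivWithin (uniqueDiffOn_Ici 0) le_rfl).mono Ioi_subset_Ici_self
  have hLf : LaplaceIntegrable f s := laplaceIntegrable_of_abs_le_exp hs
    ((hf.continuousOn.mono Ioi_subset_Ici_self).aestronglyMeasurable measurableSet_Ioi)
    fun t ht => hfb t ht.le
  have hLf' : LaplaceIntegrable (derivWithin f (Ici 0)) s := laplaceIntegrable_of_abs_le_exp hs
    (hf'c.aestronglyMeasurable measurableSet_Ioi) fun t ht => hfb' t ht.le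
  have hLker := laplaceIntegrable_rpow (sub_pos.2 hα1) hs0
  have hker := laplace_rpow (sub_pos.2 hα1) hs0
  simp only [sub_sub_cancel_left] at hLker hker
  have hcaputo := laplace_const_mul (1 / Gamma (1 - α))
    (fun t => ∫ u in (0 : ℝ)..t, (t - u) ^ (-α) * derivWithin f (Ici 0) u) s
  rw [laplace_intervalIntegral_conv hLker hLf', hker,
    laplace_deriv (hf.continuousOn 0 self_mem_Ici) hderiv hLf hLf', hf0, sub_zero] at hcaputo
  refine hcaputo.trans ?_
  have hΓ : Gamma (1 - α) ≠ 0 := (Gamma_pos_of_pos (sub_pos.2 hα1)).ne'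
  rw [laplace, neg_sub, rpow_sub_one hs0.ne']
  field_simp

theorem laplace_caputo (α σ : ℝ) (hα0 : 0 < α) (hα1 : α < 1) (hσ : 0 ≤ σ)
    (f : ℝ → ℝ) (hf : ContDiffOn ℝ 1 f (Set.Ici 0)) (hf0 : f 0 = 0) (M : ℝ) (hM : 0 < M)
    (hfb : ∀ t : ℝ, 0 ≤ t → |f t| ≤ M * Real.exp (σ * t))
    (hfb' : ∀ t : ℝ, 0 ≤ t → |derivWithin f (Set.Ici 0) t| ≤ M * Real.exp (σ * t)) :
    ∀ s : ℝ, σ < s →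
      ∫ t in Set.Ioi (0 : ℝ), Real.exp (-s * t) *
          ((1 / Real.Gamma (1 - α)) *
            ∫ u in (0 : ℝ)..t, (t - u) ^ (-α) * derivWithin f (Set.Ici 0) u) =
        s ^ α * ∫ t in Set.Ioi (0 : ℝ), Real.exp (-s * t) * f t :=
  laplace_caputo_general α σ hα1 hσ f hf hf0 M hfb hfb'
end
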